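/- For n = m(m+1)/2 + k with m ≥ 0 and 0 < k < m+1, the minimum in the recurrence optcost(n) = min_{1 ≤ b ≤ n}[ b(1+b) + (n-b)(1+b) + optcost(n-b) ] is attained both at b = m and at b = m+1; for k = 0 it is attained at b = m (for m ≥ 1); and for k = m+1 it is attained at b = m+1. -/

import Mathlib

/-!
Write `tri m = m (m + 1) / 2`. The recurrence is solved by `triCost`, whose increment at the
`j`-th job is `j + m + 1` for `tri m < j ≤ tri (m + 1)`. Enlarging the first batch from `b` to
`b + 1` changes `n (1 + b) + triCost (n - b)` by `n` minus the increment at `n - b`; since the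
increments grow with `j`, this change is nondecreasing in `b`, so the cost is convex in `b` and
minimal where the change turns nonnegative. For `n = tri m + k` with `0 < k < m + 1` the
increment at `n - m` is exactly `n`, so `b = m` and `b = m + 1` tie. Finally `optcost = triCost`
because the recurrence has a unique solution.
-/

/-- Cost of a list of batch sizes, where `i` batches have already been scheduled
and `t` jobs already processed: batch `b` completes at time `i + 1 + t + b`. -/
def batchCostAux : ℕ → ℕ → List ℕ → ℕ
  | _, _, [] => 0
  | i, t, b :: rest => b * (i + 1 + t + b) + batchCostAux (i + 1) (t + b) rest

/-- Total cost of a composition `l = (b_1, ..., b_r)`:  `Σ_i b_i (i + Σ_{j ≤ i} b_j)`. -/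
def batchCost (l : List ℕ) : ℕ := batchCostAux 0 0 l

/-- Minimum sum of completion times for `n` unit jobs in the list 1-batch problem. -/
noncomputable def optcost (n : ℕ) : ℕ :=
  sInf {c | ∃ l : List ℕ, (∀ b ∈ l, 0 < b) ∧ l.sum = n ∧ batchCost l = c}

lemma batchCostAux_eq (l : List ℕ) (i t : ℕ) :
    batchCostAux i t l = batchCost l + (i + t) * l.sum := by
  induction l generalizing i t with
  | nil => rfl
  | cons b rest ih =>
    rw [batchCost, batchCostAux, batchCostAux, ih, ih, List.sum_cons]
    ring

lemma batchCost_cons (b : ℕ) (l : List ℕ) :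
    batchCost (b :: l) = b * (1 + b) + batchCost l + (1 + b) * l.sum := by
  rw [batchCost, batchCostAux, batchCostAux_eq]
  ring

lemma optcost_le_batchCost {l : List ℕ} (hpos : ∀ b ∈ l, 0 < b) :
    optcost l.sum ≤ batchCost l :=
  Nat.sInf_le ⟨l, hpos, rfl, rfl⟩

lemma exists_batchCost_eq_optcost (n : ℕ) :
    ∃ l : List ℕ, (∀ b ∈ l, 0 < b) ∧ l.sum = n ∧ batchCost l = optcost n := by
  have hne : {c | ∃ l : List ℕ, (∀ b ∈ l, 0 < b) ∧ l.sum = n ∧ batchCost l = c}.Nonempty := by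
    rcases Nat.eq_zero_or_pos n with rfl | hn
    · exact ⟨_, [], by simp, rfl, rfl⟩
    · exact ⟨_, [n], by simpa using hn, by simp, rfl⟩
  exact Nat.sInf_mem hne

lemma optcost_zero : optcost 0 = 0 :=
  Nat.eq_zero_of_le_zero (optcost_le_batchCost (l := []) (by simp))

lemma optcost_le_add {n b : ℕ} (hb : 0 < b) (hbn : b ≤ n) :
    optcost n ≤ n * (1 + b) + optcost (n - b) := by
  obtain ⟨l, hpos, hsum, hcost⟩ := exists_batchCost_eq_optcost (n - b)
  have hle := optcost_le_batchCost (l := b :: l) (by simpa [hb] using hpos)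
  rw [List.sum_cons, hsum, Nat.add_sub_cancel' hbn, batchCost_cons, hcost, hsum] at hle
  calc optcost n ≤ b * (1 + b) + optcost (n - b) + (1 + b) * (n - b) := hle
    _ = n * (1 + b) + optcost (n - b) := by zify [hbn]; ring

lemma exists_optcost_eq_add {n : ℕ} (hn : 0 < n) :
    ∃ b, 0 < b ∧ b ≤ n ∧ optcost n = n * (1 + b) + optcost (n - b) := by
  obtain ⟨_ | ⟨b, l⟩, hpos, rfl, hcost⟩ := exists_batchCost_eq_optcost n
  · exact absurd hn (lt_irrefl 0)
  have hb : 0 < b := hpos b List.mem_cons_self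
  have hrest : optcost l.sum ≤ batchCost l :=
    optcost_le_batchCost fun x hx => hpos x (List.mem_cons_of_mem b hx)
  rw [List.sum_cons] at hcost ⊢
  refine ⟨b, hb, Nat.le_add_right _ _, le_antisymm (optcost_le_add hb (Nat.le_add_right _ _)) ?_⟩
  rw [Nat.add_sub_cancel_left, ← hcost, batchCost_cons]
  linarith

theorem optcost_eq_of_recurrence {f : ℕ → ℕ} (h0 : f 0 = 0)
    (hle : ∀ n b, f n ≤ n * (1 + b) + f (n - b))
    (hex : ∀ n, 0 < n → ∃ b, 0 < b ∧ b ≤ n ∧ f n = n * (1 + b) + f (n - b)) :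
    optcost = f := by
  funext n
  refine Nat.strong_induction_on n fun n ih => ?_
  rcases Nat.eq_zero_or_pos n with rfl | hn
  · rw [optcost_zero, h0]
  obtain ⟨b, hb, hbn, hfb⟩ := hex n hn
  obtain ⟨b', hb', hb'n, hopt⟩ := exists_optcost_eq_add hn
  apply le_antisymm
  · calc optcost n ≤ n * (1 + b) + optcost (n - b) := optcost_le_add hb hbn
      _ = f n := by rw [ih _ (by omega), hfb]
  · calc f n ≤ n * (1 + b') + f (n - b') := hle n b'
      _ = optcost n := by rw [← ih _ (by omega), hopt]

lemma le_apply_of_succ_le_of_le_succ {α : Type*} [Preorder α] {c : ℕ → α} {b₀ : ℕ}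
    (hdec : ∀ b < b₀, c (b + 1) ≤ c b) (hinc : ∀ b, b₀ ≤ b → c b ≤ c (b + 1)) (b : ℕ) :
    c b₀ ≤ c b := by
  rcases le_total b₀ b with h | h
  · exact Nat.rel_of_forall_rel_succ_of_le_of_le (· ≤ ·) hinc le_rfl h
  · exact Nat.decreasingInduction (motive := fun b _ => c b₀ ≤ c b)
      (fun b hb ih => ih.trans (hdec b hb)) le_rfl h

def tri : ℕ → ℕ
  | 0 => 0
  | m + 1 => tri m + (m + 1)

lemma tri_succ (m : ℕ) : tri (m + 1) = tri m + (m + 1) := rfl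

lemma mul_add_one_div_two_eq_tri (m : ℕ) : m * (m + 1) / 2 = tri m := by
  induction m with
  | zero => rfl
  | succ m ih =>
    rw [tri_succ, ← ih, show (m + 1) * (m + 1 + 1) = m * (m + 1) + 2 * (m + 1) by ring,
      Nat.add_mul_div_left _ _ two_pos]

lemma tri_mono : Monotone tri :=
  monotone_nat_of_le_succ fun _ => Nat.le_add_right _ _

lemma le_tri (m : ℕ) : m ≤ tri m := by
  induction m with
  | zero => rfl
  | succ m ih => rw [tri_succ]; omega

lemma exists_eq_tri_succ_add {n : ℕ} (hn : 0 < n) : ∃ m k, k ≤ m + 1 ∧ n = tri (m + 1) + k := by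
  induction n with
  | zero => omega
  | succ n ih =>
    rcases Nat.eq_zero_or_pos n with rfl | hn
    · exact ⟨0, 0, Nat.zero_le _, rfl⟩
    obtain ⟨m, k, hk, rfl⟩ := ih hn
    rcases hk.lt_or_eq with hk | hk
    · exact ⟨m, k + 1, hk, rfl⟩
    · exact ⟨m + 1, 0, Nat.zero_le _, by rw [hk]; rfl⟩

/-- The index `m` with `tri m < j ≤ tri (m + 1)`, for `j > 0`. -/
def triBlock (j : ℕ) : ℕ := Nat.findGreatest (fun i => tri i < j) j

lemma le_triBlock {i j : ℕ} (h : tri i < j) : i ≤ triBlock j :=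
  Nat.le_findGreatest ((le_tri i).trans h.le) h

lemma triBlock_le {i j : ℕ} (h : j ≤ tri (i + 1)) : triBlock j ≤ i := by
  by_contra! hlt
  have hspec : tri (triBlock j) < j :=
    Nat.findGreatest_of_ne_zero (P := fun i => tri i < j) rfl (by omega)
  have hmono : tri (i + 1) ≤ tri (triBlock j) := tri_mono hlt
  omega

lemma triBlock_eq {i j : ℕ} (h₁ : tri i < j) (h₂ : j ≤ tri (i + 1)) : triBlock j = i :=
  le_antisymm (triBlock_le h₂) (le_triBlock h₁)

def triCost : ℕ → ℕ
  | 0 => 0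
  | j + 1 => triCost j + (j + 1 + triBlock (j + 1) + 1)

lemma triCost_succ (j : ℕ) : triCost (j + 1) = triCost j + (j + 1 + triBlock (j + 1) + 1) := rfl

lemma triCost_batch_succ_add {n b : ℕ} (hb : b < n) :
    n * (1 + (b + 1)) + triCost (n - (b + 1)) + (n - b + triBlock (n - b) + 1)
      = n * (1 + b) + triCost (n - b) + n := by
  obtain ⟨j, hj⟩ : ∃ j, n - b = j + 1 := ⟨n - (b + 1), by omega⟩
  rw [hj, triCost_succ, show n - (b + 1) = j by omega]
  ring

lemma triCost_eq_batch_succ {n b : ℕ} (hb : b < n) (hblock : triBlock (n - b) + 1 = b)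
    (h : triCost n = n * (1 + b) + triCost (n - b)) :
    triCost n = n * (1 + (b + 1)) + triCost (n - (b + 1)) := by
  have := triCost_batch_succ_add hb
  omega

lemma triCost_succ_eq_batch {n b : ℕ} (hb : b ≤ n)
    (hblock : triBlock (n + 1) = triBlock (n + 1 - b) + 1)
    (h : triCost n = n * (1 + b) + triCost (n - b)) :
    triCost (n + 1) = (n + 1) * (1 + b) + triCost (n + 1 - b) := by
  rw [show n + 1 - b = n - b + 1 by omega, triCost_succ, triCost_succ, h, hblock,
    show n - b + 1 = n + 1 - b by omega]
  ring_nf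
  omega

lemma triCost_tri_succ_add_of_tri {m : ℕ}
    (h : triCost (tri (m + 1)) = tri (m + 1) * (1 + (m + 1)) + triCost (tri (m + 1) - (m + 1)))
    {k : ℕ} (hk : k ≤ m + 1) :
    triCost (tri (m + 1) + k)
      = (tri (m + 1) + k) * (1 + (m + 1)) + triCost (tri (m + 1) + k - (m + 1)) := by
  induction k with
  | zero => exact h
  | succ k ih =>
    have htri := tri_succ m
    have htri' := tri_succ (m + 1)
    have hblock : triBlock (tri (m + 1) + k + 1) = m + 1 :=
      triBlock_eq (by omega) (by omega)
    have hblock' : triBlock (tri (m + 1) + k + 1 - (m + 1)) = m :=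
      triBlock_eq (by omega) (by omega)
    rw [← add_assoc]
    exact triCost_succ_eq_batch (by omega) (by rw [hblock, hblock']) (ih (by omega))

lemma triCost_tri_succ (m : ℕ) :
    triCost (tri (m + 1)) = tri (m + 1) * (1 + (m + 1)) + triCost (tri (m + 1) - (m + 1)) := by
  induction m with
  | zero => decide
  | succ m ih =>
    -- cross the block of `m + 1` with batch `m + 1`, then raise the batch to `m + 2`
    have htri := tri_succ m
    have htri' := tri_succ (m + 1)
    have hblock : triBlock (tri (m + 1)) = m := triBlock_eq (by omega) le_rfl
    have hblock' : triBlock (tri (m + 1) + (m + 1) + 1) = m + 1 :=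
      triBlock_eq (by omega) (by omega)
    have hlast := triCost_tri_succ_add_of_tri ih le_rfl
    have hnext := triCost_eq_batch_succ (by omega) (by rw [Nat.add_sub_cancel, hblock]) hlast
    have hshift := triCost_succ_eq_batch (by omega)
      (by rw [hblock', show tri (m + 1) + (m + 1) + 1 - (m + 1 + 1) = tri (m + 1) by omega,
        hblock]) hnext
    rwa [htri']

lemma triCost_tri_succ_add {m k : ℕ} (hk : k ≤ m + 1) :
    triCost (tri (m + 1) + k)
      = (tri (m + 1) + k) * (1 + (m + 1)) + triCost (tri (m + 1) + k - (m + 1)) :=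
  triCost_tri_succ_add_of_tri (triCost_tri_succ m) hk

lemma triCost_tri_succ_add_of_pos {m k : ℕ} (hk₀ : 0 < k) (hk : k ≤ m + 1) :
    triCost (tri (m + 1) + k)
      = (tri (m + 1) + k) * (1 + (m + 2)) + triCost (tri (m + 1) + k - (m + 2)) := by
  have htri := tri_succ m
  have hblock : triBlock (tri (m + 1) + k - (m + 1)) = m := triBlock_eq (by omega) (by omega)
  exact triCost_eq_batch_succ (by omega) (by rw [hblock]) (triCost_tri_succ_add hk)

lemma triCost_le_batch {m k : ℕ} (hk : k ≤ m + 1) (b : ℕ) :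
    triCost (tri (m + 1) + k)
      ≤ (tri (m + 1) + k) * (1 + b) + triCost (tri (m + 1) + k - b) := by
  set n := tri (m + 1) + k with hn
  have htri := tri_succ m
  rw [triCost_tri_succ_add hk]
  refine le_apply_of_succ_le_of_le_succ (c := fun b => n * (1 + b) + triCost (n - b))
    (fun b hb => ?_) (fun b hb => ?_) b
  · have hstep := triCost_batch_succ_add (n := n) (b := b) (by omega)
    have hblock : m ≤ triBlock (n - b) := le_triBlock (by omega)
    omega
  · rcases lt_or_ge b n with hbn | hbn
    · have hstep := triCost_batch_succ_add hbn
      have hblock : triBlock (n - b) ≤ m := triBlock_le (by omega)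
      omega
    · rw [Nat.sub_eq_zero_of_le hbn, Nat.sub_eq_zero_of_le (by omega)]
      gcongr
      omega

theorem optcost_eq_triCost : optcost = triCost := by
  refine optcost_eq_of_recurrence rfl (fun n b => ?_) (fun n hn => ?_)
  · rcases Nat.eq_zero_or_pos n with rfl | hn
    · exact Nat.zero_le _
    obtain ⟨m, k, hk, rfl⟩ := exists_eq_tri_succ_add hn
    exact triCost_le_batch hk b
  · obtain ⟨m, k, hk, rfl⟩ := exists_eq_tri_succ_add hn
    exact ⟨m + 1, m.succ_pos, (le_tri _).trans (Nat.le_add_right _ _), triCost_tri_succ_add hk⟩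

theorem optcost_first_batch_general (m k n : ℕ)
    (hn : n = m * (m + 1) / 2 + k) :
    (0 < k → k < m + 1 →
        optcost n = m * (1 + m) + (n - m) * (1 + m) + optcost (n - m) ∧
        optcost n = (m + 1) * (1 + (m + 1)) + (n - (m + 1)) * (1 + (m + 1))
          + optcost (n - (m + 1))) ∧
    (k = 0 → 1 ≤ m →
        optcost n = m * (1 + m) + (n - m) * (1 + m) + optcost (n - m)) ∧
    (k = m + 1 →
        optcost n = (m + 1) * (1 + (m + 1)) + (n - (m + 1)) * (1 + (m + 1))
          + optcost (n - (m + 1))) := by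
  rw [mul_add_one_div_two_eq_tri] at hn
  have hsplit : ∀ b ≤ n, b * (1 + b) + (n - b) * (1 + b) = n * (1 + b) := fun b hb => by
    rw [← add_mul, Nat.add_sub_cancel' hb]
  have hmn : m ≤ n := by have := le_tri m; omega
  rw [optcost_eq_triCost]
  refine ⟨fun hk₀ hkm => ?_, fun hk₀ hm => ?_, fun hkm => ?_⟩
  · obtain ⟨m, rfl⟩ : ∃ m', m = m' + 1 := ⟨m - 1, by omega⟩
    have := le_tri (m + 1)
    rw [hsplit _ hmn, hsplit _ (by omega), hn]
    exact ⟨triCost_tri_succ_add (by omega), triCost_tri_succ_add_of_pos hk₀ (by omega)⟩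
  · obtain ⟨m, rfl⟩ : ∃ m', m = m' + 1 := ⟨m - 1, by omega⟩
    rw [hsplit _ hmn, hn]
    exact triCost_tri_succ_add (by omega)
  · rw [hsplit _ (by omega), hn, hkm, ← tri_succ]
    exact triCost_tri_succ m

/-- Optimal first-batch sizes: for `n = m(m+1)/2 + k`, the minimum in the
recurrence is attained at `b = m` and `b = m+1` when `0 < k < m+1`; at `b = m`
when `k = 0` (and `m ≥ 1`); and at `b = m+1` when `k = m+1`. -/
theorem optcost_first_batch (m k n : ℕ) (hk : k ≤ m + 1)
    (hn : n = m * (m + 1) / 2 + k) :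
    (0 < k → k < m + 1 →
        optcost n = m * (1 + m) + (n - m) * (1 + m) + optcost (n - m) ∧
        optcost n = (m + 1) * (1 + (m + 1)) + (n - (m + 1)) * (1 + (m + 1))
          + optcost (n - (m + 1))) ∧
    (k = 0 → 1 ≤ m →
        optcost n = m * (1 + m) + (n - m) * (1 + m) + optcost (n - m)) ∧
    (k = m + 1 →
        optcost n = (m + 1) * (1 + (m + 1)) + (n - (m + 1)) * (1 + (m + 1))
          + optcost (n - (m + 1))) :=
  optcost_first_batch_general m k n hn
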